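/- arXiv:1601.06336 — 2 statements merged into one kernel-verified Lean document; each statement's English description precedes it below -/
import Mathlib

section
/- Let 𝔽 be ℝ or ℂ, X a Banach space over 𝔽 with dim X ≥ 2, and 𝒜 a standard operator algebra in B(X). If S ∈ 𝒜 satisfies [A, S]₃ = 0 for all A ∈ 𝒜, then there exist a scalar λ ∈ 𝔽 and an element N ∈ 𝒜 with N² = 0 such that S = λI + N. -/
set_option synthInstance.maxHeartbeats 400000
set_option maxHeartbeats 1000000

/-- The commutator `[A,B] = AB - BA` in a ring. -/
def bracket1 {R : Type*} [Ring R] (A B : R) : R := A * B - B * A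

/-- The 3-commutator `[A,B]₃ = [[[A,B],B],B]` in a ring. -/
def bracket3 {R : Type*} [Ring R] (A B : R) : R := bracket1 (bracket1 (bracket1 A B) B) B

/-- A standard operator algebra on a normed space `X` over `𝕜` is a subalgebra of
`B(X)` (automatically containing the identity) containing all finite-rank operators. -/
def IsStandardOperatorAlgebra (𝕜 : Type*) [RCLike 𝕜] (X : Type*)
    [NormedAddCommGroup X] [NormedSpace 𝕜 X]
    (𝒜 : Subalgebra 𝕜 (X →L[𝕜] X)) : Prop :=
  ∀ T : X →L[𝕜] X, FiniteDimensional 𝕜 (LinearMap.range (T : X →ₗ[𝕜] X)) → T ∈ 𝒜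

/-!
Testing `[A, T]₃ = 0` against the rank-one operators `A = f ⊗ x` gives, for all `x`, `y` and `f`,
`f(T³y) x - 3 f(T²y) Tx + 3 f(Ty) T²x - f(y) T³x = 0`.
If every vector is an eigenvector of `T`, then `T` is scalar. Otherwise pick `u` with `u, Tu`
independent and `f` with `f u = 0`, `f (Tu) = 1`; the identity with `y = u` makes `T` a root of
`3t² - 3βt + f(T³u)` with `β = f(T²u)`, and applying `f ∘ T` to this at `u` shows that the
discriminant vanishes, so `(T - β/2)² = 0`.
-/

theorem map_bracket3 {R S F : Type*} [Ring R] [Ring S] [FunLike F R S] [RingHomClass F R S]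
    (φ : F) (A B : R) : φ (bracket3 A B) = bracket3 (φ A) (φ B) := by
  simp only [bracket3, bracket1, map_sub, map_mul]

theorem bracket3_eq {R : Type*} [Ring R] (A B : R) :
    bracket3 A B = A * B ^ 3 - 3 * (B * A * B ^ 2) + 3 * (B ^ 2 * A * B) - B ^ 3 * A := by
  simp only [bracket3, bracket1]
  noncomm_ring

theorem LinearIndependent.exists_strongDual_apply_eq_single {K M ι : Type*} [Field K]
    [TopologicalSpace K] [IsTopologicalRing K] [AddCommGroup M] [TopologicalSpace M] [Module K M]
    [SeparatingDual K M] [Finite ι] [DecidableEq ι] {v : ι → M} (hv : LinearIndependent K v)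
    (i : ι) :
    ∃ f : StrongDual K M, ∀ j, f (v j) = (Pi.single i 1 : ι → K) j := by
  obtain ⟨f, hf⟩ := SeparatingDual.dualMap_surjective_iff.mpr hv (Finsupp.lapply i)
  refine ⟨f, fun j => ?_⟩
  simpa [Finsupp.single_apply, Pi.single_apply, eq_comm] using
    LinearMap.congr_fun hf (Finsupp.single j 1)

section TopologicalModule

variable {R M : Type*} [CommRing R] [TopologicalSpace R]
  [AddCommGroup M] [TopologicalSpace M] [IsTopologicalAddGroup M] [Module R M]
  [ContinuousSMul R M]

theorem bracket3_smulRight_apply (f : StrongDual R M) (T : M →L[R] M) (x y : M) :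
    bracket3 (f.smulRight x) T y = f (T (T (T y))) • x - (3 * f (T (T y))) • T x
      + (3 * f (T y)) • T (T x) - f y • T (T (T x)) := by
  simp only [bracket3_eq, pow_succ, pow_zero, one_mul, sub_apply, add_apply, mul_apply_eq_comp,
    ContinuousLinearMap.smulRight_apply, map_smul, ContinuousLinearMap.ofNat_apply, mul_smul]
  module

end TopologicalModule

section Field

variable {K M : Type*} [Field K] [CharZero K] [TopologicalSpace K]
  [AddCommGroup M] [TopologicalSpace M] [IsTopologicalAddGroup M] [Module K M]
  [ContinuousSMul K M]

theorem sq_sub_smul_one_eq_zero_of_forall_bracket3_smulRight {T : M →L[K] M}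
    {f : StrongDual K M} {u : M} (hu : f u = 0) (hTu : f (T u) = 1)
    (hT : ∀ x, bracket3 (f.smulRight x) T = 0) :
    (T - (f (T (T u)) / 2) • 1) ^ 2 = 0 := by
  have hsq : ∀ x, T (T x) = f (T (T u)) • T x - (f (T (T (T u))) / 3) • x := by
    intro x
    have := bracket3_smulRight_apply f T x u
    rw [hT x, zero_apply, hu, hTu] at this
    linear_combination (norm := module) (-(1 : K) / 3) • this
  have hcoeff : f (T (T (T u))) / 3 = f (T (T u)) ^ 2 / 4 := by
    have := congrArg f (congrArg T (hsq u))
    simp only [map_sub, map_smul, hTu, smul_eq_mul] at this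
    linear_combination (1 / 4 : K) * this
  ext x
  have := hsq x
  rw [hcoeff] at this
  simp only [sq, mul_apply_eq_comp, sub_apply, smul_apply, one_apply_eq_self, map_sub, map_smul,
    zero_apply]
  linear_combination (norm := module) this

theorem exists_sq_sub_smul_one_eq_zero_of_forall_bracket3_smulRight [IsTopologicalRing K]
    [SeparatingDual K M] {T : M →L[K] M} (hT : ∀ (f : StrongDual K M) x, bracket3 (f.smulRight x) T = 0) :
    ∃ l : K, (T - l • 1) ^ 2 = 0 := by
  by_cases hscalar : ∀ v, ¬ LinearIndependent K ![v, T v]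
  · obtain ⟨l, hl⟩ := LinearMap.exists_eq_smul_id_of_forall_notLinearIndependent hscalar
    refine ⟨l, ?_⟩
    have : T - l • 1 = 0 := by
      ext x
      simpa [sub_eq_zero] using LinearMap.congr_fun hl x
    simp [this]
  · obtain ⟨u, hu⟩ := not_forall_not.mp hscalar
    obtain ⟨f, hf⟩ := LinearIndependent.exists_strongDual_apply_eq_single hu 1
    exact ⟨_, sq_sub_smul_one_eq_zero_of_forall_bracket3_smulRight (by simpa using hf 0)
      (by simpa using hf 1) (hT f)⟩

end Field

theorem IsStandardOperatorAlgebra.smulRight_mem {𝕜 X : Type*} [RCLike 𝕜] [NormedAddCommGroup X]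
    [NormedSpace 𝕜 X] {𝒜 : Subalgebra 𝕜 (X →L[𝕜] X)} (h𝒜 : IsStandardOperatorAlgebra 𝕜 X 𝒜)
    (f : StrongDual 𝕜 X) (x : X) : f.smulRight x ∈ 𝒜 := by
  apply h𝒜
  have : LinearMap.range (f.smulRight x : X →ₗ[𝕜] X) ≤ 𝕜 ∙ x := by
    rintro _ ⟨y, rfl⟩
    exact Submodule.smul_mem _ _ (Submodule.mem_span_singleton_self x)
  exact Submodule.finiteDimensional_of_le this

theorem stmt_6_general {𝕜 X : Type*} [RCLike 𝕜] [NormedAddCommGroup X] [NormedSpace 𝕜 X]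
    (𝒜 : Subalgebra 𝕜 (X →L[𝕜] X)) (h𝒜 : IsStandardOperatorAlgebra 𝕜 X 𝒜)
    (S : 𝒜) (h : ∀ A : 𝒜, bracket3 A S = 0) :
    ∃ (l : 𝕜) (N : 𝒜), N * N = 0 ∧ S = l • (1 : 𝒜) + N := by
  have hS : ∀ (f : StrongDual 𝕜 X) x, bracket3 (f.smulRight x) (S : X →L[𝕜] X) = 0 :=
    fun f x => by
      simpa [map_bracket3] using congrArg 𝒜.val (h ⟨f.smulRight x, h𝒜.smulRight_mem f x⟩)
  obtain ⟨l, hl⟩ := exists_sq_sub_smul_one_eq_zero_of_forall_bracket3_smulRight hS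
  refine ⟨l, S - l • 1, Subtype.ext ?_, by abel⟩
  simpa [sq] using hl

theorem stmt_6 {𝕜 X : Type*} [RCLike 𝕜] [NormedAddCommGroup X] [NormedSpace 𝕜 X]
    [CompleteSpace X] (hdim : 2 ≤ Module.rank 𝕜 X)
    (𝒜 : Subalgebra 𝕜 (X →L[𝕜] X)) (h𝒜 : IsStandardOperatorAlgebra 𝕜 X 𝒜)
    (S : 𝒜) (h : ∀ A : 𝒜, bracket3 A S = 0) :
    ∃ (l : 𝕜) (N : 𝒜), N * N = 0 ∧ S = l • (1 : 𝒜) + N :=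
  stmt_6_general 𝒜 h𝒜 S h
end

section
/- Let 𝔽 be ℝ or ℂ, X a Banach space over 𝔽 with dim X ≥ 2, and 𝒜 a standard operator algebra in B(X). If Φ : 𝒜 → 𝒜 is a surjective strong 3-commutativity preserving map, then for any A, B ∈ 𝒜 there exists a scalar λ_{A,B} ∈ 𝔽 such that Φ(A + B) = Φ(A) + Φ(B) + λ_{A,B}·I. -/
set_option synthInstance.maxHeartbeats 400000
set_option maxHeartbeats 1000000

/-!
The 3-commutator is additive in its first argument, so for surjective `Φ` the defect
`D = Φ(A + B) - Φ(A) - Φ(B)` satisfies `[D, C]₃ = 0` for every `C`. For an idempotent `P` one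
has `[D, P]₃ = [D, P]`, hence `D` commutes with every finite-rank idempotent, in particular with
the rank-one projections `y ↦ f(y) x`, `f(x) = 1`, provided by Hahn–Banach. Thus every vector is
an eigenvector of `D`, and `D` is a scalar.
-/

section Ring

variable {R : Type*} [Ring R]

lemma bracket3_add_left (A A' B : R) : bracket3 (A + A') B = bracket3 A B + bracket3 A' B := by
  simp only [bracket3, bracket1]
  noncomm_ring

lemma bracket3_sub_left (A A' B : R) : bracket3 (A - A') B = bracket3 A B - bracket3 A' B := by
  simp only [bracket3, bracket1]
  noncomm_ring

lemma IsIdempotentElem.bracket3_right {P : R} (hP : IsIdempotentElem P) (D : R) :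
    bracket3 D P = D * P - P * D := by
  have hPP (Y : R) : P * (P * Y) = P * Y := by rw [← mul_assoc, hP.eq]
  simp only [bracket3, bracket1, sub_mul, mul_sub, mul_assoc, hP.eq, hPP]
  abel

lemma IsIdempotentElem.commute_of_bracket3_eq_zero {P D : R} (hP : IsIdempotentElem P)
    (h : bracket3 D P = 0) : Commute D P :=
  sub_eq_zero.mp (hP.bracket3_right D ▸ h)

lemma bracket3_map_add_sub_map_sub_map {Φ : R → R} (hsurj : Function.Surjective Φ)
    (hpres : ∀ A B, bracket3 (Φ A) (Φ B) = bracket3 A B) (A B C : R) :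
    bracket3 (Φ (A + B) - Φ A - Φ B) C = 0 := by
  obtain ⟨T, rfl⟩ := hsurj C
  rw [bracket3_sub_left, bracket3_sub_left, hpres, hpres, hpres, bracket3_add_left]
  abel

end Ring

namespace ContinuousLinearMap

variable {𝕜 V : Type*} [Field 𝕜] [TopologicalSpace 𝕜] [AddCommGroup V] [TopologicalSpace V]
  [Module 𝕜 V] [ContinuousSMul 𝕜 V]

lemma isIdempotentElem_smulRight {f : V →L[𝕜] 𝕜} {x : V} (hfx : f x = 1) :
    IsIdempotentElem (f.smulRight x) := by
  ext y
  simp [hfx]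

lemma finiteDimensional_range_smulRight (f : V →L[𝕜] 𝕜) (x : V) :
    FiniteDimensional 𝕜 (LinearMap.range ((f.smulRight x : V →L[𝕜] V) : V →ₗ[𝕜] V)) := by
  refine Submodule.finiteDimensional_of_le (S₂ := 𝕜 ∙ x) ?_
  rintro _ ⟨y, rfl⟩
  exact Submodule.mem_span_singleton.mpr ⟨f y, rfl⟩

lemma exists_eq_smul_one_of_forall_commute [IsTopologicalRing 𝕜] [SeparatingDual 𝕜 V]
    (T : V →L[𝕜] V)
    (h : ∀ P : V →L[𝕜] V, IsIdempotentElem P →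
      FiniteDimensional 𝕜 (LinearMap.range (P : V →ₗ[𝕜] V)) → Commute T P) :
    ∃ l : 𝕜, T = l • 1 := by
  suffices ∀ x, ¬ LinearIndependent 𝕜 ![x, (T : V →ₗ[𝕜] V) x] by
    obtain ⟨l, hl⟩ := LinearMap.exists_eq_smul_id_of_forall_notLinearIndependent this
    exact ⟨l, ext fun x => by simpa using congr($hl x)⟩
  intro x
  rcases eq_or_ne x 0 with rfl | hx
  · exact fun hli => hli.ne_zero 0 rfl
  obtain ⟨f, hfx⟩ := SeparatingDual.exists_eq_one (R := 𝕜) hx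
  have hcomm := h _ (isIdempotentElem_smulRight hfx) (finiteDimensional_range_smulRight f x)
  have heigen : T x = f (T x) • x := by simpa [hfx] using congr($hcomm x)
  rw [LinearIndependent.pair_iff]
  push Not
  exact ⟨f (T x), -1, by simp [← heigen], by simp⟩

end ContinuousLinearMap

theorem stmt_8_general {𝕜 X : Type*} [RCLike 𝕜] [NormedAddCommGroup X] [NormedSpace 𝕜 X]
    (𝒜 : Subalgebra 𝕜 (X →L[𝕜] X)) (h𝒜 : IsStandardOperatorAlgebra 𝕜 X 𝒜)
    (Φ : 𝒜 → 𝒜) (hsurj : Function.Surjective Φ)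
    (hpres : ∀ A B : 𝒜, bracket3 (Φ A) (Φ B) = bracket3 A B) :
    ∀ A B : 𝒜, ∃ l : 𝕜, Φ (A + B) = Φ A + Φ B + l • (1 : 𝒜) := by
  intro A B
  obtain ⟨l, hl⟩ := ContinuousLinearMap.exists_eq_smul_one_of_forall_commute
    ((Φ (A + B) - Φ A - Φ B : 𝒜) : X →L[𝕜] X) fun P hP hfin => by
      have hP' : IsIdempotentElem (⟨P, h𝒜 P hfin⟩ : 𝒜) := Subtype.ext hP
      exact congrArg Subtype.val
        (hP'.commute_of_bracket3_eq_zero (bracket3_map_add_sub_map_sub_map hsurj hpres A B _))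
  have hD : Φ (A + B) - Φ A - Φ B = l • (1 : 𝒜) := Subtype.ext (by simpa using hl)
  refine ⟨l, ?_⟩
  rw [← hD]
  abel

theorem stmt_8 {𝕜 X : Type*} [RCLike 𝕜] [NormedAddCommGroup X] [NormedSpace 𝕜 X]
    [CompleteSpace X] (hdim : 2 ≤ Module.rank 𝕜 X)
    (𝒜 : Subalgebra 𝕜 (X →L[𝕜] X)) (h𝒜 : IsStandardOperatorAlgebra 𝕜 X 𝒜)
    (Φ : 𝒜 → 𝒜) (hsurj : Function.Surjective Φ)
    (hpres : ∀ A B : 𝒜, bracket3 (Φ A) (Φ B) = bracket3 A B) :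
    ∀ A B : 𝒜, ∃ l : 𝕜, Φ (A + B) = Φ A + Φ B + l • (1 : 𝒜) :=
  stmt_8_general 𝒜 h𝒜 Φ hsurj hpres
end
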